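/- Let Σ_YY be m×m positive definite, σ² > 0, a_i > 0, λ ≥ 0. The function φ(v) = (1/2)·log(1 + a_i/(σ² + v_i)) − (λ/2)·log det(Σ_YY + D(v)) + (λ/2)·(log det Σ_YY + tr(Σ_YY⁻¹ D(v))), with D(v) = diag(v₁,…,v_m), is convex in v_i on [0, ∞). -/

import Mathlib

/-!
As a function of the single coordinate `t = v i`, only row `i` of `Σ_YY + diag v` depends on `t`,
so by multilinearity of the determinant `det (Σ_YY + diag v) = c + t d`, with `d` a cofactor;
likewise the trace term is affine in `t`. The KL part is therefore `-log` of a positive affine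
function plus an affine function, hence convex. The mutual-information term `log (1 + a / x)`
is convex on `x > 0` because its derivative `-a / (x (x + a))` is increasing.
-/

open Matrix Real Set

lemma convexOn_log_one_add_div {a : ℝ} (ha : 0 ≤ a) :
    ConvexOn ℝ (Ioi 0) (fun x => log (1 + a / x)) := by
  have hderiv : ∀ x ∈ Ioi (0 : ℝ),
      HasDerivAt (fun x => log (1 + a / x)) (-a / (x * (x + a))) x := by
    intro x (hx : 0 < x)
    have hinner : HasDerivAt (fun x => 1 + a / x) (-a / x ^ 2) x := by
      simpa [div_eq_mul_inv, neg_div] using ((hasDerivAt_inv hx.ne').const_mul a).const_add 1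
    convert hinner.log (by positivity) using 1
    field_simp
  have hderiv_eq : EqOn (deriv fun x => log (1 + a / x)) (fun x => -a / (x * (x + a))) (Ioi 0) :=
    fun x hx => (hderiv x hx).deriv
  refine MonotoneOn.convexOn_of_deriv (convex_Ioi 0)
    (fun x hx => (hderiv x hx).continuousAt.continuousWithinAt) ?_ ?_ <;>
    rw [interior_Ioi]
  · exact fun x hx => (hderiv x hx).differentiableAt.differentiableWithinAt
  · intro x (hx : 0 < x) y (hy : 0 < y) hxy
    simp only [hderiv_eq hx, hderiv_eq hy, neg_div, neg_le_neg_iff]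
    gcongr

lemma convexOn_const_add_mul {s : Set ℝ} (hs : Convex ℝ s) (c d : ℝ) :
    ConvexOn ℝ s (fun t => c + t * d) := by
  refine ⟨hs, fun x _ y _ a b _ _ hab => le_of_eq ?_⟩
  simp only [smul_eq_mul]
  linear_combination -c * hab

lemma concaveOn_log_const_add_mul {s : Set ℝ} (hs : Convex ℝ s) {c d : ℝ}
    (hpos : ∀ t ∈ s, 0 < c + t * d) : ConcaveOn ℝ s (fun t => log (c + t * d)) :=
  let line : ℝ →ᵃ[ℝ] ℝ :=
    ⟨fun t => c + t * d, LinearMap.mulRight ℝ d, fun p v => by simp; ring⟩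
  (strictConcaveOn_log_Ioi.concaveOn.comp_affineMap line).subset hpos hs

namespace Matrix

variable {n R : Type*} [DecidableEq n]

lemma diagonal_update_eq_add_single [AddZeroClass R] (v : n → R) (i : n) (t : R) :
    diagonal (Function.update v i t) = diagonal (Function.update v i 0) + single i i t := by
  rw [← diagonal_single, diagonal_add]
  congr 1
  ext j
  rcases eq_or_ne j i with rfl | hj <;> simp [*]

variable [Fintype n] [CommRing R]

lemma det_add_single_self (M : Matrix n n R) (i : n) (t : R) :
    (M + single i i t).det = M.det + t * M.adjugate i i := by
  have hrow : M + single i i t = M.updateRow i (M i + t • Pi.single i 1) := by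
    ext j k
    rcases eq_or_ne j i with rfl | hj
    · simp [single, Pi.single_apply, eq_comm]
    · simp [hj, single, Ne.symm hj]
  rw [hrow, det_updateRow_add, updateRow_eq_self, det_updateRow_smul, adjugate_apply]

lemma det_add_diagonal_update (A : Matrix n n R) (v : n → R) (i : n) (t : R) :
    (A + diagonal (Function.update v i t)).det =
      (A + diagonal (Function.update v i 0)).det
        + t * (A + diagonal (Function.update v i 0)).adjugate i i := by
  rw [diagonal_update_eq_add_single, ← add_assoc, det_add_single_self]

lemma trace_mul_diagonal_update (A : Matrix n n R) (v : n → R) (i : n) (t : R) :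
    (A * diagonal (Function.update v i t)).trace =
      (A * diagonal (Function.update v i 0)).trace + t * A i i := by
  rw [diagonal_update_eq_add_single, mul_add, trace_add, trace_mul_single, op_smul_eq_mul,
    mul_comm]

end Matrix

/-- Convexity in `v_i` of the game-`G₂` cost function
`φ(v) = (1/2)·log(1 + a_i/(σ²+v_i)) − (λ/2)·log det(Σ_YY + diag v)
      + (λ/2)(log det Σ_YY + tr(Σ_YY⁻¹ diag v))`. -/
theorem stmt_8 (m : ℕ) (Syy : Matrix (Fin m) (Fin m) ℝ) (hS : Syy.PosDef)
    (σ2 : ℝ) (hσ : 0 < σ2) (ai : ℝ) (hai : 0 < ai) (lam : ℝ) (hlam : 0 ≤ lam) :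
    ∀ (i : Fin m) (v : Fin m → ℝ), (∀ j, 0 ≤ v j) →
      ConvexOn ℝ (Set.Ici (0 : ℝ)) (fun t : ℝ =>
        (1 / 2) * Real.log (1 + ai / (σ2 + t))
          - (lam / 2) * Real.log ((Syy + Matrix.diagonal (Function.update v i t)).det)
          + (lam / 2) * (Real.log Syy.det
              + (Syy⁻¹ * Matrix.diagonal (Function.update v i t)).trace)) := by
  intro i v hv
  obtain ⟨c, d, hdet⟩ :
      ∃ c d : ℝ, ∀ t, (Syy + diagonal (Function.update v i t)).det = c + t * d :=
    ⟨_, _, det_add_diagonal_update Syy v i⟩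
  obtain ⟨q, r, htr⟩ :
      ∃ q r : ℝ, ∀ t, (Syy⁻¹ * diagonal (Function.update v i t)).trace = q + t * r :=
    ⟨_, _, trace_mul_diagonal_update Syy⁻¹ v i⟩
  have hdet_pos : ∀ t ∈ Ici (0 : ℝ), 0 < c + t * d := fun t (ht : 0 ≤ t) =>
    hdet t ▸ (hS.add_posSemidef <| posSemidef_diagonal_iff.2 <|
      Function.forall_update_iff _ (p := fun _ x => 0 ≤ x) |>.2 ⟨ht, fun j _ => hv j⟩).det_pos
  have hshift : Ici (0 : ℝ) ⊆ (σ2 + ·) ⁻¹' Ioi 0 := fun t (ht : 0 ≤ t) =>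
    show 0 < σ2 + t by linarith
  have hinfo : ConvexOn ℝ (Ici 0) (fun t => log (1 + ai / (σ2 + t))) :=
    ((convexOn_log_one_add_div hai.le).translate_right σ2).subset hshift (convex_Ici 0)
  have hlogdet : ConcaveOn ℝ (Ici 0) (fun t => log (c + t * d)) :=
    concaveOn_log_const_add_mul (convex_Ici 0) hdet_pos
  have htrace : ConvexOn ℝ (Ici 0) (fun t => log Syy.det + (q + t * r)) :=
    (convexOn_const _ (convex_Ici 0)).add (convexOn_const_add_mul (convex_Ici 0) q r)
  have hlam2 : 0 ≤ lam / 2 := by linarith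
  simp only [hdet, htr]
  exact ((hinfo.smul (by norm_num)).sub (hlogdet.smul hlam2)).add (htrace.smul hlam2)
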